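/- arXiv:2305.02308 — 5 statements merged into one kernel-verified Lean document; each statement's English description precedes it below -/
import Mathlib

section
/- Consider a commutative diagram of sets with a top fork X₀ →f X₁ ⇉(α,β) X₂ and a bottom fork Y₀ →g Y₁ ⇉(γ,δ) Y₂, with vertical injections i₀ : Y₀ → X₀, i₁ : Y₁ → X₁, i₂ : Y₂ → X₂ satisfying f ∘ i₀ = i₁ ∘ g, α ∘ i₁ = i₂ ∘ γ, β ∘ i₁ = i₂ ∘ δ. Suppose the top fork is split, i.e., there exist u : X₁ → X₀ and v : X₂ → X₁ with u ∘ f = id, v ∘ β = id, v ∘ α = f ∘ u. Then the bottom fork is an equalizer if and only if for all y₁ ∈ Y₁ with γ(y₁) = δ(y₁), there exists y₀ ∈ Y₀ such that u(i₁(y₁)) = i₀(y₀). -/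
/-- A fork of sets `Y₀ → Y₁ ⇉ Y₂` is an equalizer iff every `y₁` equalized by the two maps
has a unique preimage. -/
def IsSetEqualizer {Y₀ Y₁ Y₂ : Type*} (g : Y₀ → Y₁) (γ δ : Y₁ → Y₂) : Prop :=
  ∀ y₁ : Y₁, γ y₁ = δ y₁ → ∃! y₀ : Y₀, g y₀ = y₁

/-- Given a commutative diagram of sets with a split top fork and injective vertical maps,
the bottom fork is an equalizer iff every equalized element of `Y₁` satisfies the lifting
condition `u (i₁ y₁) = i₀ y₀` for some `y₀ ∈ Y₀`. -/
theorem bottom_fork_equalizer_iff {X₀ X₁ X₂ Y₀ Y₁ Y₂ : Type*}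
    (f : X₀ → X₁) (α β : X₁ → X₂)
    (g : Y₀ → Y₁) (γ δ : Y₁ → Y₂)
    (i₀ : Y₀ → X₀) (i₁ : Y₁ → X₁) (i₂ : Y₂ → X₂)
    (u : X₁ → X₀) (v : X₂ → X₁)
    (hfork : α ∘ f = β ∘ f)
    (hbfork : γ ∘ g = δ ∘ g)
    (huf : u ∘ f = id) (hvβ : v ∘ β = id) (hvα : v ∘ α = f ∘ u)
    (hi₀ : Function.Injective i₀) (hi₁ : Function.Injective i₁)
    (hsq : f ∘ i₀ = i₁ ∘ g)
    (hsqα : α ∘ i₁ = i₂ ∘ γ) (hsqβ : β ∘ i₁ = i₂ ∘ δ) :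
    IsSetEqualizer g γ δ ↔
      ∀ y₁ : Y₁, γ y₁ = δ y₁ → ∃ y₀ : Y₀, u (i₁ y₁) = i₀ y₀ := by
  have huf' : ∀ x, u (f x) = x := fun x => congrFun huf x
  have hvβ' : ∀ x, v (β x) = x := fun x => congrFun hvβ x
  have hvα' : ∀ x, v (α x) = f (u x) := fun x => congrFun hvα x
  have hsq' : ∀ y, f (i₀ y) = i₁ (g y) := fun y => congrFun hsq y
  have hsqα' : ∀ y, α (i₁ y) = i₂ (γ y) := fun y => congrFun hsqα y
  have hsqβ' : ∀ y, β (i₁ y) = i₂ (δ y) := fun y => congrFun hsqβ y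
  have hg : Function.Injective g := by
    intro a b hab
    have hf : Function.Injective f := Function.LeftInverse.injective huf'
    apply hi₀; apply hf
    rw [hsq' a, hsq' b, hab]
  have key : ∀ y₁ y₀, γ y₁ = δ y₁ → u (i₁ y₁) = i₀ y₀ → g y₀ = y₁ := by
    intro y₁ y₀ hy hy₀
    apply hi₁
    rw [← hsq' y₀, ← hy₀, ← hvα' (i₁ y₁), hsqα' y₁, hy, ← hsqβ' y₁, hvβ']
  constructor
  · intro h y₁ hy
    obtain ⟨y₀, hy₀, -⟩ := h y₁ hy
    exact ⟨y₀, by rw [← hy₀, ← hsq' y₀, huf']⟩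
  · intro h y₁ hy
    obtain ⟨y₀, hy₀⟩ := h y₁ hy
    exact ⟨y₀, key y₁ y₀ hy hy₀, fun z hz => hg (hz.trans (key y₁ y₀ hy hy₀).symm)⟩
end

section
/- Consider a diagram of sets with top fork X₀ →f X₁ ⇉(α,β) X₂ and bottom fork Y₀ →g Y₁ ⇉(γ,δ) Y₂, maps i₀ : Y₀ → X₀, i₁ : Y₁ → X₁, i₂ : Y₂ → X₂ and r₀ : X₀ → Y₀, r₁ : X₁ → Y₁, r₂ : X₂ → Y₂, such that: (i) the top fork is an equalizer and γ ∘ g = δ ∘ g; (ii) r₀ ∘ i₀ = id, r₁ ∘ i₁ = id, r₂ ∘ i₂ = id; (iii) i₁ is bijective with inverse r₁; (iv) f ∘ i₀ = i₁ ∘ g, α ∘ i₁ = i₂ ∘ γ, β ∘ i₁ = i₂ ∘ δ. Then the following are equivalent: (a) r₀ is bijective; (b) g ∘ r₀ = r₁ ∘ f; (c) the bottom fork is an equalizer. -/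
/-- Diagram chasing lemma: given a top equalizer fork with retractions `r₀, r₁, r₂` of
sections `i₀, i₁, i₂`, where `i₁` is bijective with inverse `r₁`, the following are
equivalent: (a) `r₀` is bijective; (b) `g ∘ r₀ = r₁ ∘ f`; (c) the bottom fork is an
equalizer. -/
theorem diagram_chase {X₀ X₁ X₂ Y₀ Y₁ Y₂ : Type*}
    (f : X₀ → X₁) (α β : X₁ → X₂)
    (g : Y₀ → Y₁) (γ δ : Y₁ → Y₂)
    (i₀ : Y₀ → X₀) (i₁ : Y₁ → X₁) (i₂ : Y₂ → X₂)
    (r₀ : X₀ → Y₀) (r₁ : X₁ → Y₁) (r₂ : X₂ → Y₂)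
    (htfork : α ∘ f = β ∘ f) (hinj : Function.Injective f)
    (htop : IsSetEqualizer f α β)
    (hbfork : γ ∘ g = δ ∘ g)
    (hr₀ : r₀ ∘ i₀ = id) (hr₁ : r₁ ∘ i₁ = id) (hr₂ : r₂ ∘ i₂ = id)
    (hi₁bij : Function.Bijective i₁) (hi₁inv : i₁ ∘ r₁ = id)
    (hsq : f ∘ i₀ = i₁ ∘ g)
    (hsqα : α ∘ i₁ = i₂ ∘ γ) (hsqβ : β ∘ i₁ = i₂ ∘ δ) :
    (Function.Bijective r₀ ↔ g ∘ r₀ = r₁ ∘ f) ∧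
    (g ∘ r₀ = r₁ ∘ f ↔ IsSetEqualizer g γ δ) := by
  have e0 : ∀ y, r₀ (i₀ y) = y := fun y => congrFun hr₀ y
  have e1 : ∀ y, r₁ (i₁ y) = y := fun y => congrFun hr₁ y
  have e2 : ∀ y, r₂ (i₂ y) = y := fun y => congrFun hr₂ y
  have e1' : ∀ x, i₁ (r₁ x) = x := fun x => congrFun hi₁inv x
  have hs : ∀ y, f (i₀ y) = i₁ (g y) := fun y => congrFun hsq y
  have hsa : ∀ y, α (i₁ y) = i₂ (γ y) := fun y => congrFun hsqα y
  have hsb : ∀ y, β (i₁ y) = i₂ (δ y) := fun y => congrFun hsqβ y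
  have hginj : Function.Injective g := by
    intro a b h
    have hf : f (i₀ a) = f (i₀ b) := by rw [hs, hs, h]
    have := hinj hf
    calc a = r₀ (i₀ a) := (e0 a).symm
      _ = r₀ (i₀ b) := by rw [this]
      _ = b := e0 b
  have hbc : (g ∘ r₀ = r₁ ∘ f) ↔ IsSetEqualizer g γ δ := by
    constructor
    · intro hb y₁ hy
      have hx : α (i₁ y₁) = β (i₁ y₁) := by rw [hsa, hsb, hy]
      obtain ⟨x₀, hx₀, _⟩ := htop (i₁ y₁) hx
      have hg0 : g (r₀ x₀) = y₁ := by
        have h1 : g (r₀ x₀) = r₁ (f x₀) := congrFun hb x₀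
        rw [h1, hx₀, e1]
      refine ⟨r₀ x₀, hg0, fun y hy' => hginj (by rw [hy', hg0])⟩
    · intro hc
      funext x₀
      have hγδ : γ (r₁ (f x₀)) = δ (r₁ (f x₀)) := by
        have h1 : i₂ (γ (r₁ (f x₀))) = i₂ (δ (r₁ (f x₀))) := by
          rw [← hsa, ← hsb, e1']
          exact congrFun htfork x₀
        have h2 := congrArg r₂ h1
        rwa [e2, e2] at h2
      obtain ⟨y₀, hy₀, _⟩ := hc _ hγδ
      have hx : f (i₀ y₀) = f x₀ := by rw [hs, hy₀, e1']
      have hxi := hinj hx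
      show g (r₀ x₀) = r₁ (f x₀)
      rw [← hxi, e0, hy₀, hx]
  have hab : Function.Bijective r₀ ↔ g ∘ r₀ = r₁ ∘ f := by
    constructor
    · rintro ⟨hinj0, -⟩
      have e0' : ∀ x, i₀ (r₀ x) = x := fun x => hinj0 (by rw [e0])
      funext x
      apply hi₁bij.injective
      show i₁ (g (r₀ x)) = i₁ (r₁ (f x))
      rw [← hs, e0', e1']
    · intro hb
      refine ⟨fun a b h => ?_, fun y => ⟨i₀ y, e0 y⟩⟩
      have ha : g (r₀ a) = r₁ (f a) := congrFun hb a
      have hb' : g (r₀ b) = r₁ (f b) := congrFun hb b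
      have h3 : r₁ (f a) = r₁ (f b) := by rw [← ha, ← hb', h]
      have h4 := congrArg i₁ h3
      rw [e1', e1'] at h4
      exact hinj h4
  exact ⟨hab, hbc⟩
end

section
/- The contravariant power set functor detects equalizers: given functions g : Y₀ → Y₁ and γ, δ : Y₁ → Y₂ with γ ∘ g = δ ∘ g, if the induced diagram of preimage maps P(Y₂) ⇉ P(Y₁) → P(Y₀) is an equalizer of sets (that is, the preimage map P(g) is a bijection from {S ⊆ Y₁ : γ⁻¹(S) = δ⁻¹(S)} onto P(Y₀)), then the original diagram Y₀ → Y₁ ⇉ Y₂ is an equalizer of sets. -/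
/-- The contravariant power set functor detects equalizers: given `g : Y₀ → Y₁` and
`γ, δ : Y₁ → Y₂` with `γ ∘ g = δ ∘ g`, if the induced diagram of preimage maps
`P(Y₂) ⇉ P(Y₁) → P(Y₀)` is an equalizer of sets — i.e. the preimage map `P(g)` induces a
bijection from `P(Y₁)` modulo the identification of `γ ⁻¹' U` with `δ ⁻¹' U` onto
`P(Y₀)` — then `Y₀ → Y₁ ⇉ Y₂` is an equalizer of sets: `g` is injective with image
`{y₁ : γ y₁ = δ y₁}`. -/
theorem powerset_detects_equalizers {Y₀ Y₁ Y₂ : Type*}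
    (g : Y₀ → Y₁) (γ δ : Y₁ → Y₂)
    (hfork : γ ∘ g = δ ∘ g)
    (hcompat : ∀ S T : Set Y₁,
      (∃ U : Set Y₂, S = γ ⁻¹' U ∧ T = δ ⁻¹' U) → g ⁻¹' S = g ⁻¹' T)
    (h : Function.Bijective
      (Quot.lift (fun S : Set Y₁ => (g ⁻¹' S : Set Y₀))
        (fun S T hST => hcompat S T hST) :
        Quot (fun S T : Set Y₁ => ∃ U : Set Y₂, S = γ ⁻¹' U ∧ T = δ ⁻¹' U) → Set Y₀)) :
    Function.Injective g ∧ ∀ y₁ : Y₁, γ y₁ = δ y₁ ↔ ∃ y₀ : Y₀, g y₀ = y₁ := by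
  constructor
  · intro a b hab
    obtain ⟨q, hq⟩ := h.2 ({a} : Set Y₀)
    obtain ⟨S, rfl⟩ := Quot.exists_rep q
    have hS : g ⁻¹' S = {a} := hq
    have ha : a ∈ g ⁻¹' S := by rw [hS]; rfl
    have hb : b ∈ g ⁻¹' S := by
      simp only [Set.mem_preimage] at ha ⊢
      rwa [← hab]
    rw [hS] at hb
    exact hb.symm
  · intro y₁
    constructor
    · intro hy
      by_contra hne
      push_neg at hne
      have hpre : g ⁻¹' ({y₁} : Set Y₁) = g ⁻¹' (∅ : Set Y₁) := by
        ext x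
        simp only [Set.mem_preimage, Set.mem_singleton_iff, Set.mem_empty_iff_false,
          iff_false]
        exact hne x
      have hquot : Quot.mk _ ({y₁} : Set Y₁) = Quot.mk _ (∅ : Set Y₁) := h.1 hpre
      have hφ : (fun S : Set Y₁ => y₁ ∈ S) ({y₁} : Set Y₁) =
          (fun S : Set Y₁ => y₁ ∈ S) (∅ : Set Y₁) := by
        have := congrArg (Quot.lift (fun S : Set Y₁ => (y₁ ∈ S : Prop))
          (fun S T hST => by
            obtain ⟨U, rfl, rfl⟩ := hST
            simp only [Set.mem_preimage, hy])) hquot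
        exact this
      simp at hφ
    · rintro ⟨y₀, rfl⟩
      exact congrFun hfork y₀
end

section
/- Let X be a topological space with an equivalence relation R and quotient map p : X → X/R, and let p_S : X → Z be a continuous closed surjection which coequalizes R (i.e., x R y implies p_S(x) = p_S(y)), inducing a continuous comparison map c : X/R → Z with c ∘ p = p_S. Assume for every x ∈ X that the fiber p_S⁻¹(p_S(x)), with subspace topology, is a T₁ space and that p_S⁻¹(p_S(x)) ⊆ R⁻¹(closure{x}) where R⁻¹(A) = p⁻¹(p(A)). Then c is a homeomorphism. -/
open Topology

/-- Let `X` be a topological space with an equivalence relation (setoid) `s` and quotient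
map `p : X → X/s`, and let `pS : X → Z` be a continuous closed surjection coequalizing
`s`. If every fiber `pS ⁻¹' {pS x}` is a `T₁` space in the subspace topology and is
contained in the saturation of the closure of `{x}`, then the comparison map
`c : X/s → Z` is a homeomorphism. -/
theorem comparison_map_homeomorph {X Z : Type*} [TopologicalSpace X] [TopologicalSpace Z]
    (s : Setoid X) (pS : X → Z)
    (hcont : Continuous pS) (hclosed : IsClosedMap pS) (hsurj : Function.Surjective pS)
    (hcoeq : ∀ x y : X, s.r x y → pS x = pS y)
    (hT1 : ∀ x : X, T1Space (pS ⁻¹' {pS x}))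
    (hfib : ∀ x : X, pS ⁻¹' {pS x} ⊆ {y : X | ∃ z ∈ closure ({x} : Set X), s.r y z}) :
    IsHomeomorph (Quotient.lift pS hcoeq : Quotient s → Z) := by
  rw [isHomeomorph_iff_continuous_isClosedMap_bijective]
  refine ⟨continuous_quot_lift _ hcont, ?_, ?_, fun z => ?_⟩
  · -- closed map
    intro C hC
    have : Quotient.lift pS hcoeq '' C = pS '' (Quotient.mk s ⁻¹' C) := by
      ext z
      constructor
      · rintro ⟨q, hq, rfl⟩
        obtain ⟨x, rfl⟩ := Quotient.exists_rep q
        exact ⟨x, hq, rfl⟩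
      · rintro ⟨x, hx, rfl⟩
        exact ⟨Quotient.mk s x, hx, rfl⟩
    rw [this]
    exact hclosed _ (hC.preimage continuous_quotient_mk')
  · -- injective
    intro a b hab
    obtain ⟨x, rfl⟩ := Quotient.exists_rep a
    obtain ⟨y, rfl⟩ := Quotient.exists_rep b
    simp only [Quotient.lift_mk] at hab
    have hy : y ∈ pS ⁻¹' {pS x} := by simp [hab]
    obtain ⟨z, hz, hyz⟩ := hfib x hy
    have hzf : z ∈ pS ⁻¹' {pS x} := by
      exact (hcoeq y z hyz).symm.trans hab.symm
    -- in the T1 fiber, z ∈ closure {x} implies z = x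
    haveI := hT1 x
    have hxf : x ∈ pS ⁻¹' {pS x} := rfl
    have hmem : (⟨z, hzf⟩ : pS ⁻¹' {pS x}) ∈ closure {(⟨x, hxf⟩ : pS ⁻¹' {pS x})} := by
      rw [closure_subtype, Set.image_singleton]
      exact hz
    have : z = x := congrArg Subtype.val
      (isClosed_singleton.closure_subset hmem : _ ∈ ({_} : Set _))
    subst this
    exact Quotient.sound (s.symm hyz)
  · obtain ⟨x, rfl⟩ := hsurj z
    exact ⟨Quotient.mk s x, rfl⟩
end

section
/- Let F : T ⇄ S : U be an adjunction of tensor triangulated categories with U conservative, satisfying the projection formula U(s) ⊗ t ≅ U(s ⊗ F(t)). Then for every s ∈ S: (a) U(s) lies in the localizing ideal generated by U(1_S); (b) U(s) is a direct summand of U(1_S) ⊗ U(s) ≅ UFU(s); and (c) for any localizing ideal L of T, locid⟨U(1_S) ⊗ L⟩ = locid⟨U(S) ∩ L⟩. -/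
open CategoryTheory CategoryTheory.Limits CategoryTheory.Pretriangulated
  CategoryTheory.MonoidalCategory

universe v u u'

/-- A localizing tensor ideal of a big tensor triangulated category. -/
structure LocalizingIdeal (C : Type u) [Category.{v} C] [HasZeroObject C] [Preadditive C]
    [HasShift C ℤ] [∀ n : ℤ, (shiftFunctor C n).Additive] [Pretriangulated C]
    [MonoidalCategory C] [HasCoproducts.{v} C] where
  carrier : Set C
  zero_mem : ∀ X : C, Limits.IsZero X → X ∈ carrier
  iso_mem : ∀ {X Y : C}, (X ≅ Y) → X ∈ carrier → Y ∈ carrier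
  shift_mem : ∀ (n : ℤ) {X : C}, X ∈ carrier → X⟦n⟧ ∈ carrier
  ext_mem : ∀ T : Triangle C, (T ∈ distTriang C) → T.obj₁ ∈ carrier →
    T.obj₂ ∈ carrier → T.obj₃ ∈ carrier
  retract_mem : ∀ {X Y : C} (i : X ⟶ Y) (r : Y ⟶ X), i ≫ r = 𝟙 X →
    Y ∈ carrier → X ∈ carrier
  tensor_mem : ∀ (X : C) {Y : C}, Y ∈ carrier → X ⊗ Y ∈ carrier
  coprod_mem : ∀ {ι : Type v} (f : ι → C), (∀ i, f i ∈ carrier) → (∐ f) ∈ carrier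

/-- The localizing ideal generated by a collection of objects. -/
def locIdealGen (C : Type u) [Category.{v} C] [HasZeroObject C] [Preadditive C]
    [HasShift C ℤ] [∀ n : ℤ, (shiftFunctor C n).Additive] [Pretriangulated C]
    [MonoidalCategory C] [HasCoproducts.{v} C] (E : Set C) : Set C :=
  {X : C | ∀ L : LocalizingIdeal C, E ⊆ L.carrier → X ∈ L.carrier}

/-- Let `F : C ⇄ D : U` be an adjunction of tensor triangulated categories with `U`
conservative and satisfying the projection formula `U(s) ⊗ t ≅ U(s ⊗ F(t))`. Then for
every `s : D`: (a) `U(s)` lies in the localizing ideal generated by `U(𝟙_D)`;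
(b) `U(s)` is a direct summand of `U(𝟙_D) ⊗ U(s)`; and (c) for any localizing ideal `L`
of `C`, `locid⟨U(𝟙_D) ⊗ L⟩ = locid⟨U(D) ∩ L⟩`. -/
theorem localizing_from_S
    {C : Type u} [Category.{v} C] [HasZeroObject C] [Preadditive C]
    [HasShift C ℤ] [∀ n : ℤ, (shiftFunctor C n).Additive] [Pretriangulated C]
    [MonoidalCategory C] [HasCoproducts.{v} C]
    {D : Type u'} [Category.{v} D] [HasZeroObject D] [Preadditive D]
    [HasShift D ℤ] [∀ n : ℤ, (shiftFunctor D n).Additive] [Pretriangulated D]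
    [MonoidalCategory D] [HasCoproducts.{v} D]
    (F : C ⥤ D) [F.Monoidal] [F.CommShift ℤ] [F.IsTriangulated]
    (U : D ⥤ C) (adj : F ⊣ U) [U.ReflectsIsomorphisms]
    (proj : ∀ (s : D) (t : C), Nonempty (U.obj s ⊗ t ≅ U.obj (s ⊗ F.obj t))) :
    (∀ s : D, U.obj s ∈ locIdealGen C {U.obj (𝟙_ D)}) ∧
    (∀ s : D, ∃ (i : U.obj s ⟶ U.obj (𝟙_ D) ⊗ U.obj s)
      (r : U.obj (𝟙_ D) ⊗ U.obj s ⟶ U.obj s), i ≫ r = 𝟙 (U.obj s)) ∧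
    (∀ L : LocalizingIdeal C,
      locIdealGen C ((fun t => U.obj (𝟙_ D) ⊗ t) '' L.carrier) =
      locIdealGen C {t : C | t ∈ L.carrier ∧ ∃ s : D, Nonempty (U.obj s ≅ t)}) := by

  classical
  -- a section of the counit at the unit object
  have hj : ∃ j : 𝟙_ D ⟶ F.obj (U.obj (𝟙_ D)), j ≫ adj.counit.app (𝟙_ D) = 𝟙 (𝟙_ D) := by
    refine ⟨(Functor.Monoidal.εIso F).hom ≫ F.map (adj.unit.app (𝟙_ C)) ≫
      F.map (U.map (Functor.Monoidal.εIso F).inv), ?_⟩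
    have h1 := adj.counit.naturality (Functor.Monoidal.εIso F).inv
    simp only [Functor.comp_map, Functor.id_map] at h1
    simp only [Category.assoc, h1]
    rw [adj.left_triangle_components_assoc (𝟙_ C)]
    simp
  obtain ⟨j, hjc⟩ := hj
  -- (a), in the convenient form
  have ha : ∀ (s : D) (L : LocalizingIdeal C),
      U.obj (𝟙_ D) ∈ L.carrier → U.obj s ∈ L.carrier := by
    intro s L h1
    obtain ⟨e⟩ := proj s (U.obj (𝟙_ D))
    have hmem : U.obj (s ⊗ F.obj (U.obj (𝟙_ D))) ∈ L.carrier :=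
      L.iso_mem e (L.tensor_mem _ h1)
    refine L.retract_mem (U.map ((ρ_ s).inv ≫ (s ◁ j)))
      (U.map ((s ◁ adj.counit.app (𝟙_ D)) ≫ (ρ_ s).hom)) ?_ hmem
    rw [← U.map_comp, ← U.map_id]
    congr 1
    simp only [Category.assoc, ← MonoidalCategory.whiskerLeft_comp_assoc, hjc]
    simp
  -- (b)
  have hb : ∀ s : D, ∃ (i : U.obj s ⟶ U.obj (𝟙_ D) ⊗ U.obj s)
      (r : U.obj (𝟙_ D) ⊗ U.obj s ⟶ U.obj s), i ≫ r = 𝟙 (U.obj s) := by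
    intro s
    obtain ⟨e⟩ := proj (𝟙_ D) (U.obj s)
    let e' : U.obj (𝟙_ D) ⊗ U.obj s ≅ U.obj (F.obj (U.obj s)) :=
      e ≪≫ U.mapIso (λ_ (F.obj (U.obj s)))
    refine ⟨adj.unit.app (U.obj s) ≫ e'.inv, e'.hom ≫ U.map (adj.counit.app s), ?_⟩
    rw [Category.assoc, Iso.inv_hom_id_assoc]
    exact adj.right_triangle_components s
  refine ⟨fun s L hL => ha s L (hL rfl), hb, ?_⟩
  -- (c)
  intro L
  have mono : ∀ E₁ E₂ : Set C, E₁ ⊆ locIdealGen C E₂ →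
      locIdealGen C E₁ ⊆ locIdealGen C E₂ := by
    intro E₁ E₂ h X hX M hM
    exact hX M (fun e he => h he M hM)
  apply Set.eq_of_subset_of_subset
  · apply mono
    rintro _ ⟨t, ht, rfl⟩ M hM
    obtain ⟨e⟩ := proj (𝟙_ D) t
    have e' : U.obj (𝟙_ D) ⊗ t ≅ U.obj (F.obj t) :=
      e ≪≫ U.mapIso (λ_ (F.obj t))
    have hUF : U.obj (F.obj t) ∈ L.carrier :=
      L.iso_mem e' (L.tensor_mem _ ht)
    have : U.obj (F.obj t) ∈ M.carrier := hM ⟨hUF, ⟨F.obj t, ⟨Iso.refl _⟩⟩⟩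
    exact M.iso_mem e'.symm this
  · apply mono
    rintro t ⟨htL, s, ⟨e⟩⟩ M hM
    -- U.obj s ∈ L
    have hUs : U.obj s ∈ L.carrier := L.iso_mem e.symm htL
    have hgen : U.obj (𝟙_ D) ⊗ U.obj s ∈ M.carrier := hM ⟨U.obj s, hUs, rfl⟩
    obtain ⟨i, r, hir⟩ := hb s
    exact M.iso_mem e (M.retract_mem i r hir hgen)
end
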